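/- arXiv:2412.08417 — 7 statements merged into one kernel-verified Lean document; each statement's English description precedes it below -/
import Mathlib

section
/- For n ≥ 6, the signless Laplacian spectral radius q(S_{n,1}⁺) is the largest real root of the polynomial x³ − (n+3)x² + 3nx − 4, and it satisfies n < q(S_{n,1}⁺) < n + 1. -/
/-!
For an eigenvalue `x ∉ {1, 3}` of `Q = D + A`, the eigen-equations at the leaves and at the two
triangle vertices force an eigenvector to take the values `v₀ / (x - 1)` at every leaf and
`v₀ / (x - 3)` at both triangle vertices, where `v₀` is its value at the centre; the equation at the
centre then becomes `f(x) v₀ = 0` for the cubic `f(x) = x³ − (n+3)x² + 3nx − 4`, and `v₀ ≠ 0`.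
Conversely these values give an eigenvector for every root `x > 3` of `f`. Since `f(n) = -4`,
`f(n + 1) = (n - 3)(n + 2) > 0` and `f` is strictly increasing on `[n, ∞)`, `f` has a root `r` in
`(n, n + 1)` that dominates every real root of `f`, hence every eigenvalue of `Q` exceeding `3`.
-/

open SimpleGraph Finset

/-- The signless Laplacian spectral radius of a graph: the largest real eigenvalue
(root of the characteristic polynomial) of `Q(G) = D(G) + A(G)`. -/
noncomputable def qrad {n : ℕ} (G : SimpleGraph (Fin n)) : ℝ :=
  letI := Classical.decRel G.Adj
  sSup {x : ℝ | (Matrix.charpoly (G.degMatrix ℝ + G.adjMatrix ℝ)).IsRoot x}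

/-- `contains H G` : `G` contains a subgraph isomorphic to `H`. -/
def contains {α β : Type*} (H : SimpleGraph α) (G : SimpleGraph β) : Prop :=
  ∃ f : α → β, Function.Injective f ∧ ∀ a b, H.Adj a b → G.Adj (f a) (f b)

/-- The theta graph θ(1,2,2) (= K₄ minus an edge). -/
def theta122 : SimpleGraph (Fin 4) :=
  SimpleGraph.fromEdgeSet {s(0,1), s(0,2), s(1,2), s(0,3), s(1,3)}

/-- The theta graph θ(1,2,3). -/
def theta123 : SimpleGraph (Fin 5) :=
  SimpleGraph.fromEdgeSet {s(0,1), s(0,2), s(2,1), s(0,3), s(3,4), s(4,1)}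

/-- The friendship graph `F n`: center `0`; the other vertices are paired up
`{1,2}, {3,4}, …` into triangles through the center, with a pendant vertex left
over when `n` is even. -/
def friendship (n : ℕ) : SimpleGraph (Fin n) :=
  SimpleGraph.fromRel (fun i j => i.val = 0 ∨ (i.val + 1) / 2 = (j.val + 1) / 2)

/-- `Sgraph n k` = `S_{n,k}`, the join of `K_k` with `n - k` isolated vertices. -/
def Sgraph (n k : ℕ) : SimpleGraph (Fin n) :=
  SimpleGraph.fromRel (fun i _ => i.val < k)

/-- `Splus n` = `S_{n,1}⁺`, the star `K_{1,n-1}` plus one edge between two leaves. -/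
def Splus (n : ℕ) : SimpleGraph (Fin n) :=
  SimpleGraph.fromRel (fun i j => i.val = 0 ∨ (i.val = 1 ∧ j.val = 2))

/-- `K₁ ∨ ((n-1)/3) K₃` : vertex `0` joined to `(n-1)/3` disjoint triangles. -/
def joinK3s (n : ℕ) : SimpleGraph (Fin n) :=
  SimpleGraph.fromRel (fun i j => i.val = 0 ∨ (i.val - 1) / 3 = (j.val - 1) / 3)

/-- The number of edges of `G` lying inside the vertex set `s` (the number of
edges of the induced subgraph `G[s]`). -/
noncomputable def edgesIn {V : Type*} (G : SimpleGraph V) (s : Set V) : ℕ :=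
  {e | e ∈ G.edgeSet ∧ ∀ v ∈ e, v ∈ s}.ncard

open Matrix

theorem Matrix.isRoot_charpoly_iff_exists_mulVec_eq_smul {ι K : Type*} [Fintype ι]
    [DecidableEq ι] [Field K] (M : Matrix ι ι K) (x : K) :
    M.charpoly.IsRoot x ↔ ∃ v ≠ 0, M *ᵥ v = x • v := by
  rw [Polynomial.IsRoot, eval_charpoly, ← exists_mulVec_eq_zero_iff]
  simp only [sub_mulVec, scalar_apply, ← smul_one_eq_diagonal, smul_mulVec, one_mulVec,
    sub_eq_zero, eq_comm]

theorem Fin.eq_zero_or_eq_one_or_eq_two_or_three_le {n : ℕ} (hn : 3 ≤ n) (i : Fin n) :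
    i = ⟨0, by omega⟩ ∨ i = ⟨1, by omega⟩ ∨ i = ⟨2, by omega⟩ ∨ 3 ≤ i.val := by
  simp only [Fin.ext_iff]
  omega

theorem Fin.sum_eq_of_forall_three_le {M : Type*} [AddCommMonoid M] {n : ℕ} (hn : 3 ≤ n)
    (v : Fin n → M) (c : M) (hc : ∀ i : Fin n, 3 ≤ i.val → v i = c) :
    ∑ i, v i = v ⟨0, by omega⟩ + v ⟨1, by omega⟩ + v ⟨2, by omega⟩ + (n - 3) • c := by
  obtain ⟨m, rfl⟩ := Nat.exists_eq_add_of_le' hn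
  rw [Fin.sum_univ_succ, Fin.sum_univ_succ, Fin.sum_univ_succ,
    Finset.sum_congr rfl fun i _ => hc _ (by simp), Finset.sum_const, Finset.card_univ,
    Fintype.card_fin, Nat.add_sub_cancel]
  simp only [add_assoc]
  rfl

def splusCubic (N x : ℝ) : ℝ := x ^ 3 - (N + 3) * x ^ 2 + 3 * N * x - 4

theorem splusCubic_strictMonoOn {N : ℝ} (hN : 3 ≤ N) :
    StrictMonoOn (splusCubic N) (Set.Ici N) := by
  intro a (ha : N ≤ a) b (hb : N ≤ b) hab
  -- `f b - f a = (b - a) (a² + ab + b² − (N+3)(a+b) + 3N)`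
  have hfactor : 0 < a ^ 2 + a * b + b ^ 2 - (N + 3) * (a + b) + 3 * N := by
    nlinarith [mul_nonneg (sub_nonneg.2 ha) (sub_nonneg.2 hb)]
  unfold splusCubic
  nlinarith [mul_pos (sub_pos.2 hab) hfactor]

theorem exists_splusCubic_eq_zero_mem_Ioo {N : ℝ} (hN : 3 < N) :
    ∃ r ∈ Set.Ioo N (N + 1), splusCubic N r = 0 := by
  have hcont : ContinuousOn (splusCubic N) (Set.Icc N (N + 1)) := by
    unfold splusCubic
    fun_prop
  -- `f N = -4` and `f (N + 1) = (N - 3) (N + 2)`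
  refine intermediate_value_Ioo (by linarith) hcont ⟨?_, ?_⟩ <;> unfold splusCubic <;> nlinarith

theorem le_of_splusCubic_eq_zero {N r x : ℝ} (hN : 3 ≤ N) (hr : N ≤ r)
    (hr0 : splusCubic N r = 0) (hx0 : splusCubic N x = 0) : x ≤ r := by
  by_contra! hrx
  have := splusCubic_strictMonoOn hN hr (hr.trans hrx.le) hrx
  linarith

theorem splus_adj_iff {n : ℕ} (i j : Fin n) : (Splus n).Adj i j ↔
    i ≠ j ∧ (i.val = 0 ∨ j.val = 0 ∨ (i.val = 1 ∧ j.val = 2) ∨ (j.val = 1 ∧ i.val = 2)) := by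
  simp only [Splus, fromRel_adj]
  tauto

section Splus

variable {n : ℕ} [DecidableRel (Splus n).Adj]

theorem splus_neighborFinset_center (hn : 3 ≤ n) :
    (Splus n).neighborFinset ⟨0, by omega⟩ = Finset.univ.erase ⟨0, by omega⟩ := by
  ext j
  simp only [mem_neighborFinset, splus_adj_iff, ne_eq, Fin.ext_iff, true_or, and_true,
    mem_erase, mem_univ]
  omega

theorem splus_neighborFinset_one (hn : 3 ≤ n) :
    (Splus n).neighborFinset ⟨1, by omega⟩ = {⟨0, by omega⟩, ⟨2, by omega⟩} := by
  ext j
  simp only [mem_neighborFinset, splus_adj_iff, ne_eq, Fin.ext_iff, true_and,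
    mem_insert, mem_singleton]
  omega

theorem splus_neighborFinset_two (hn : 3 ≤ n) :
    (Splus n).neighborFinset ⟨2, by omega⟩ = {⟨0, by omega⟩, ⟨1, by omega⟩} := by
  ext j
  simp only [mem_neighborFinset, splus_adj_iff, ne_eq, Fin.ext_iff, and_true,
    mem_insert, mem_singleton]
  omega

theorem splus_neighborFinset_of_three_le (i : Fin n) (hi : 3 ≤ i.val) :
    (Splus n).neighborFinset i = {⟨0, by omega⟩} := by
  ext j
  simp only [mem_neighborFinset, splus_adj_iff, ne_eq, Fin.ext_iff, mem_singleton]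
  omega

noncomputable abbrev splusQ (n : ℕ) [DecidableRel (Splus n).Adj] : Matrix (Fin n) (Fin n) ℝ :=
  (Splus n).degMatrix ℝ + (Splus n).adjMatrix ℝ

theorem splusQ_mulVec_apply (v : Fin n → ℝ) (i : Fin n) :
    (splusQ n *ᵥ v) i =
      #((Splus n).neighborFinset i) * v i + ∑ j ∈ (Splus n).neighborFinset i, v j := by
  rw [add_mulVec, Pi.add_apply, degMatrix_mulVec_apply, adjMatrix_mulVec_apply,
    card_neighborFinset_eq_degree]

theorem splusQ_mulVec_center (hn : 3 ≤ n) (v : Fin n → ℝ) :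
    (splusQ n *ᵥ v) ⟨0, by omega⟩ =
      (n - 1) * v ⟨0, by omega⟩ + (∑ j, v j - v ⟨0, by omega⟩) := by
  rw [splusQ_mulVec_apply, splus_neighborFinset_center hn,
    Finset.sum_erase_eq_sub (Finset.mem_univ _), Finset.card_erase_of_mem (Finset.mem_univ _),
    Finset.card_univ, Fintype.card_fin, Nat.cast_sub (by omega), Nat.cast_one]

theorem splusQ_mulVec_one (hn : 3 ≤ n) (v : Fin n → ℝ) :
    (splusQ n *ᵥ v) ⟨1, by omega⟩ =
      2 * v ⟨1, by omega⟩ + (v ⟨0, by omega⟩ + v ⟨2, by omega⟩) := by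
  rw [splusQ_mulVec_apply, splus_neighborFinset_one hn, Finset.sum_pair (by simp),
    Finset.card_pair (by simp), Nat.cast_ofNat]

theorem splusQ_mulVec_two (hn : 3 ≤ n) (v : Fin n → ℝ) :
    (splusQ n *ᵥ v) ⟨2, by omega⟩ =
      2 * v ⟨2, by omega⟩ + (v ⟨0, by omega⟩ + v ⟨1, by omega⟩) := by
  rw [splusQ_mulVec_apply, splus_neighborFinset_two hn, Finset.sum_pair (by simp),
    Finset.card_pair (by simp), Nat.cast_ofNat]

theorem splusQ_mulVec_of_three_le (v : Fin n → ℝ) (i : Fin n) (hi : 3 ≤ i.val) :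
    (splusQ n *ᵥ v) i = v i + v ⟨0, by omega⟩ := by
  rw [splusQ_mulVec_apply, splus_neighborFinset_of_three_le i hi, Finset.sum_singleton,
    Finset.card_singleton, Nat.cast_one, one_mul]

theorem splusQ_exists_eigenvector (hn : 3 ≤ n) {r : ℝ} (hr : 3 < r)
    (hr0 : splusCubic n r = 0) : ∃ v ≠ 0, splusQ n *ᵥ v = r • v := by
  -- the eigenvector described above, scaled by `(r - 1) (r - 3)`
  let v : Fin n → ℝ := fun i =>
    if i.val = 0 then (r - 1) * (r - 3) else if i.val ≤ 2 then r - 1 else r - 3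
  have hleaf (i : Fin n) (hi : 3 ≤ i.val) : v i = r - 3 := by
    simp [v, show i.val ≠ 0 by omega, show ¬ i.val ≤ 2 by omega]
  have hsum : ∑ i, v i = (r - 1) * (r - 3) + 2 * (r - 1) + (n - 3) * (r - 3) := by
    rw [Fin.sum_eq_of_forall_three_le hn v (r - 3) hleaf, nsmul_eq_mul, Nat.cast_sub hn]
    simp only [v, ↓reduceIte, one_ne_zero, OfNat.ofNat_ne_zero, Nat.one_le_ofNat, le_refl]
    ring
  refine ⟨v, fun h => ?_, funext fun i => ?_⟩
  · have h0 := congrFun h ⟨0, by omega⟩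
    simp only [v, if_pos rfl, Pi.zero_apply, mul_eq_zero] at h0
    rcases h0 with h1 | h3 <;> linarith
  rw [Pi.smul_apply, smul_eq_mul]
  obtain rfl | rfl | rfl | hi := Fin.eq_zero_or_eq_one_or_eq_two_or_three_le hn i
  · rw [splusQ_mulVec_center hn, hsum]
    simp only [v, if_pos rfl]
    unfold splusCubic at hr0
    linear_combination -hr0
  · rw [splusQ_mulVec_one hn]
    simp only [v, ↓reduceIte, one_ne_zero, OfNat.ofNat_ne_zero, Nat.one_le_ofNat, le_refl]
    ring
  · rw [splusQ_mulVec_two hn]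
    simp only [v, ↓reduceIte, one_ne_zero, OfNat.ofNat_ne_zero, Nat.one_le_ofNat, le_refl]
    ring
  · rw [splusQ_mulVec_of_three_le v i hi, hleaf i hi]
    simp only [v, ↓reduceIte]
    ring

theorem splusCubic_eq_zero_of_mulVec_eq_smul (hn : 3 ≤ n) {x : ℝ} (hx1 : x ≠ 1) (hx3 : x ≠ 3)
    {v : Fin n → ℝ} (hv : v ≠ 0) (hxv : splusQ n *ᵥ v = x • v) : splusCubic n x = 0 := by
  have heig (i : Fin n) : (splusQ n *ᵥ v) i = x * v i := by
    rw [hxv, Pi.smul_apply, smul_eq_mul]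
  set c := v ⟨0, by omega⟩
  have hleaf (i : Fin n) (hi : 3 ≤ i.val) : (x - 1) * v i = c := by
    linarith [splusQ_mulVec_of_three_le v i hi ▸ heig i]
  have h1 := splusQ_mulVec_one hn v ▸ heig ⟨1, by omega⟩
  have h2 := splusQ_mulVec_two hn v ▸ heig ⟨2, by omega⟩
  have h12 : v ⟨1, by omega⟩ = v ⟨2, by omega⟩ := by
    have : (x - 1) * (v ⟨1, by omega⟩ - v ⟨2, by omega⟩) = 0 := by linear_combination h2 - h1
    linarith [(mul_eq_zero.mp this).resolve_left (sub_ne_zero.2 hx1)]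
  have hpair : (x - 3) * v ⟨1, by omega⟩ = c := by linear_combination -h1 - h12
  have hc : c ≠ 0 := by
    intro hc0
    refine hv (funext fun i => ?_)
    obtain rfl | rfl | rfl | hi := Fin.eq_zero_or_eq_one_or_eq_two_or_three_le hn i
    · exact hc0
    · exact (mul_eq_zero.mp (hpair.trans hc0)).resolve_left (sub_ne_zero.2 hx3)
    · exact h12 ▸ (mul_eq_zero.mp (hpair.trans hc0)).resolve_left (sub_ne_zero.2 hx3)
    · exact (mul_eq_zero.mp ((hleaf i hi).trans hc0)).resolve_left (sub_ne_zero.2 hx1)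
  have hsum : (x - 1) * ∑ i, v i =
      (x - 1) * (c + v ⟨1, by omega⟩ + v ⟨2, by omega⟩) + (n - 3) * c := by
    rw [Finset.mul_sum, Fin.sum_eq_of_forall_three_le hn _ c hleaf, nsmul_eq_mul,
      Nat.cast_sub hn]
    push_cast
    ring
  have h0 := splusQ_mulVec_center hn v ▸ heig ⟨0, by omega⟩
  -- multiply the center equation by `(x - 1)(x - 3)` and eliminate the other entries
  have hcubic : splusCubic n x * c = 0 := by
    unfold splusCubic
    linear_combination (-(x - 3) * (x - 1)) * h0 + (x - 3) * hsum + 2 * (x - 1) * hpair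
      - (x - 1) * (x - 3) * h12
  exact (mul_eq_zero.mp hcubic).resolve_right hc

end Splus

/-- For `n ≥ 6`, `q(S_{n,1}⁺)` is the largest real root of
`x³ − (n+3)x² + 3nx − 4`, and `n < q(S_{n,1}⁺) < n + 1`. -/
theorem stmt3 (n : ℕ) (hn : 6 ≤ n) :
    ((qrad (Splus n)) ^ 3 - (n + 3) * (qrad (Splus n)) ^ 2
        + 3 * n * (qrad (Splus n)) - 4 = 0) ∧
    (∀ x : ℝ, x ^ 3 - (n + 3) * x ^ 2 + 3 * n * x - 4 = 0 → x ≤ qrad (Splus n)) ∧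
    (n : ℝ) < qrad (Splus n) ∧ qrad (Splus n) < n + 1 := by
  let := Classical.decRel (Splus n).Adj
  have hn3 : 3 ≤ n := by omega
  have hN : (3 : ℝ) < n := by exact_mod_cast (by omega : 3 < n)
  obtain ⟨r, ⟨hnr, hrn⟩, hr0⟩ := exists_splusCubic_eq_zero_mem_Ioo hN
  have hr_max (x : ℝ) (hx0 : splusCubic n x = 0) : x ≤ r :=
    le_of_splusCubic_eq_zero hN.le hnr.le hr0 hx0
  have hq : qrad (Splus n) = r := by
    refine IsGreatest.csSup_eq ⟨?_, fun x hx => ?_⟩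
    · exact (isRoot_charpoly_iff_exists_mulVec_eq_smul _ r).2
        (splusQ_exists_eigenvector hn3 (by linarith) hr0)
    · obtain ⟨v, hv, hxv⟩ := (isRoot_charpoly_iff_exists_mulVec_eq_smul _ x).1 hx
      rcases le_or_gt x 3 with hx3 | hx3
      · linarith
      · exact hr_max x
          (splusCubic_eq_zero_of_mulVec_eq_smul hn3 (by linarith) (by linarith) hv hxv)
  rw [hq]
  exact ⟨hr0, hr_max, hnr, hrn⟩
end

section
/- Let G be a simple graph on n ≥ 6 vertices whose signless Laplacian spectral radius satisfies q(G) > n + 2 − 4/(n+1), and let u be a vertex of G with 3 ≤ d(u) ≤ n − 2 such that q(G) ≤ d(u) + (1/d(u)) · Σ_{w ∈ N(u)} d(w). Then the number of edges of the subgraph of G induced by N(u) is at least d(u) − 1. -/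
open SimpleGraph Finset

/-! Each neighbour `w` of `u` has at most `n - d(u)` neighbours outside `N(u)`, so
`∑_{w ∈ N(u)} d(w) ≤ 2 e(N(u)) + d(u) (n - d(u))`. Chaining the two bounds on `q(G)` gives
`n + 2 - 4/(n+1) < n + 2 e(N(u)) / d(u)`, that is `e(N(u)) > d(u) (1 - 2/(n+1)) > d(u) - 2`
because `d(u) < n + 1`. -/

namespace SimpleGraph

variable {V : Type*} [Fintype V] [DecidableEq V] (G : SimpleGraph V) [DecidableRel G.Adj]

theorem sum_card_neighborFinset_inter_eq_two_mul_edgesIn (s : Finset V) :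
    ∑ w ∈ s, #(G.neighborFinset w ∩ s) = 2 * edgesIn G s := by
  classical
  let H := ((⊤ : G.Subgraph).induce (s : Set V)).spanningCoe
  have hadj : ∀ a b, H.Adj a b ↔ G.Adj a b ∧ a ∈ s ∧ b ∈ s := by
    intro a b
    simp only [H, Subgraph.spanningCoe_adj, Subgraph.induce_adj, Subgraph.top_adj]
    tauto
  have hdeg : ∀ w ∈ s, H.degree w = #(G.neighborFinset w ∩ s) := by
    intro w hw
    rw [← card_neighborFinset_eq_degree]
    congr 1
    ext v
    simp [hadj, hw]
  have hedges : edgesIn G s = #H.edgeFinset := by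
    rw [← Set.ncard_coe_finset, coe_edgeFinset, edgesIn]
    congr 1
    ext e
    induction e using Sym2.ind with
    | _ a b => simp [hadj]
  rw [hedges, ← H.sum_degrees_eq_twice_card_edges, ← sum_congr rfl hdeg]
  refine sum_subset (subset_univ s) fun w _ hw => ?_
  rw [← card_neighborFinset_eq_degree, card_eq_zero, eq_empty_iff_forall_notMem]
  simp [hadj, hw]

theorem sum_degree_le_two_mul_edgesIn_add (s : Finset V) :
    ∑ w ∈ s, G.degree w ≤ 2 * edgesIn G s + #s * (Fintype.card V - #s) := by
  have hout : ∀ w ∈ s, G.degree w ≤ #(G.neighborFinset w ∩ s) + (Fintype.card V - #s) := by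
    intro w _
    rw [← card_neighborFinset_eq_degree, ← card_inter_add_card_sdiff _ s, ← card_compl]
    gcongr
    exact fun v hv => mem_compl.2 (mem_sdiff.1 hv).2
  calc ∑ w ∈ s, G.degree w
      ≤ ∑ w ∈ s, (#(G.neighborFinset w ∩ s) + (Fintype.card V - #s)) := sum_le_sum hout
    _ = 2 * edgesIn G s + #s * (Fintype.card V - #s) := by
      rw [sum_add_distrib, sum_const, smul_eq_mul, sum_card_neighborFinset_inter_eq_two_mul_edgesIn]

end SimpleGraph

theorem sub_two_lt_of_lt_add_div {n d e : ℝ} (hd : 0 < d) (hdn : d ≤ n)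
    (h : n + 2 - 4 / (n + 1) < d + 1 / d * (2 * e + d * (n - d))) : d - 2 < e := by
  have hn : 0 < n + 1 := by linarith
  have h' : (n + 2 - 4 / (n + 1)) * d < 2 * e + d * n := by
    have := mul_lt_mul_of_pos_right h hd
    field_simp at this ⊢
    linarith
  have hfrac : 4 / (n + 1) * d < 4 := by
    rw [div_mul_eq_mul_div, div_lt_iff₀ hn]
    linarith
  linarith

theorem stmt4_general (n : ℕ) (G : SimpleGraph (Fin n)) [DecidableRel G.Adj]
    (u : Fin n)
    (hq : (n : ℝ) + 2 - 4 / ((n : ℝ) + 1) < qrad G)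
    (hub : qrad G ≤ (G.degree u : ℝ) +
      (1 / (G.degree u : ℝ)) * ∑ w ∈ G.neighborFinset u, (G.degree w : ℝ)) :
    G.degree u - 1 ≤ edgesIn G (G.neighborSet u) := by
  rcases Nat.eq_zero_or_pos (G.degree u) with hd0 | hd
  · simp [hd0]
  have hdn : G.degree u ≤ n := by simpa using (G.degree_lt_card_verts u).le
  have hsum : ∑ w ∈ G.neighborFinset u, (G.degree w : ℝ)
      ≤ 2 * edgesIn G (G.neighborSet u) + G.degree u * ((n : ℝ) - G.degree u) := by
    have h := G.sum_degree_le_two_mul_edgesIn_add (G.neighborFinset u)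
    rw [card_neighborFinset_eq_degree, Fintype.card_fin, coe_neighborFinset] at h
    exact_mod_cast h
  have key : (G.degree u : ℝ) < edgesIn G (G.neighborSet u) + 2 := by
    have := sub_two_lt_of_lt_add_div (d := G.degree u) (by exact_mod_cast hd)
      (by exact_mod_cast hdn) (hq.trans_le (hub.trans (by gcongr)))
    linarith
  have hlt : G.degree u < edgesIn G (G.neighborSet u) + 2 := by exact_mod_cast key
  omega

/-- If `q(G) > n + 2 − 4/(n+1)` and `u` is a vertex with `3 ≤ d(u) ≤ n − 2`
such that `q(G) ≤ d(u) + (1/d(u)) ∑_{w ∈ N(u)} d(w)`, then the induced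
subgraph `G[N(u)]` has at least `d(u) − 1` edges. -/
theorem stmt4 (n : ℕ) (hn : 6 ≤ n) (G : SimpleGraph (Fin n)) [DecidableRel G.Adj]
    (u : Fin n)
    (hq : (n : ℝ) + 2 - 4 / ((n : ℝ) + 1) < qrad G)
    (hd3 : 3 ≤ G.degree u) (hdn : G.degree u ≤ n - 2)
    (hub : qrad G ≤ (G.degree u : ℝ) +
      (1 / (G.degree u : ℝ)) * ∑ w ∈ G.neighborFinset u, (G.degree w : ℝ)) :
    G.degree u - 1 ≤ edgesIn G (G.neighborSet u) :=
  stmt4_general n G u hq hub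
end

section
/- Let G be a simple graph that is θ(1,2,3)-free. Then for every vertex u of G, the subgraph of G induced by the neighborhood N(u) contains no path on 4 vertices. -/
/-! The edge `u b` together with the paths `u a b` and `u d c b` forms a θ(1,2,3). -/

open SimpleGraph Finset

theorem contains_theta123_of_paths {V : Type*} {G : SimpleGraph V} {x y p q r : V}
    (hxy : G.Adj x y) (hxp : G.Adj x p) (hpy : G.Adj p y)
    (hxq : G.Adj x q) (hqr : G.Adj q r) (hry : G.Adj r y)
    (hxr : x ≠ r) (hyq : y ≠ q) (hpq : p ≠ q) (hpr : p ≠ r) :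
    contains theta123 G := by
  refine ⟨![x, y, p, q, r], ?_, ?_⟩
  · have := hxy.ne; have := hxp.ne; have := hpy.ne
    have := hxq.ne; have := hqr.ne; have := hry.ne
    intro i j hij
    fin_cases i <;> fin_cases j <;> simp_all [eq_comm]
  · intro i j hij
    fin_cases i <;> fin_cases j <;> simp [theta123] at hij ⊢ <;>
      first | assumption | (apply G.adj_symm; assumption)

/-- In a θ(1,2,3)-free graph, the neighborhood of any vertex induces no path
on 4 vertices. -/
theorem stmt8 {V : Type*} (G : SimpleGraph V) (hfree : ¬ contains theta123 G)
    (u a b c d : V) (ha : G.Adj u a) (hb : G.Adj u b) (hc : G.Adj u c)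
    (hd : G.Adj u d) (hac : a ≠ c) (had : a ≠ d) (hbd : b ≠ d)
    (hab : G.Adj a b) (hbc : G.Adj b c) (hcd : G.Adj c d) : False :=
  hfree <| contains_theta123_of_paths hb ha hab hd hcd.symm hbc.symm hc.ne hbd had hac
end

section
/- Let G be a simple graph that is θ(1,2,3)-free, let u be a vertex of G, and let x, y, z be three vertices of N(u) that form a triangle in G. Then every vertex w of G outside N(u) ∪ {u} is adjacent to at most one of x, y, z. -/
open SimpleGraph Finset

/-! If `w` were adjacent to both `x` and `y`, then `x y`, `x w y` and `x u z y` would be three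
internally disjoint `x`–`y` paths of lengths 1, 2 and 3, i.e. a copy of θ(1,2,3) in `G`. -/

lemma contains_theta123_of_adj {V : Type*} {G : SimpleGraph V} {a b c p q : V}
    (hab : G.Adj a b) (hac : G.Adj a c) (hcb : G.Adj c b)
    (hap : G.Adj a p) (hpq : G.Adj p q) (hqb : G.Adj q b)
    (haq : a ≠ q) (hbp : b ≠ p) (hcp : c ≠ p) (hcq : c ≠ q) :
    contains theta123 G := by
  refine ⟨![a, b, c, p, q], ?_, ?_⟩
  · simp only [Matrix.vecCons, Fin.cons_injective_iff]
    simpa [hab.ne, hac.ne, hap.ne, haq, hcb.ne', hbp, hqb.ne', hcp, hcq, hpq.ne] using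
      Function.injective_of_subsingleton _
  · intro i j hij
    fin_cases i <;> fin_cases j <;> simp [theta123] at hij ⊢ <;>
      first | assumption | symm; assumption

lemma not_adj_and_adj_of_triangle_of_theta123_free {V : Type*} {G : SimpleGraph V}
    (hfree : ¬ contains theta123 G) {u x y z w : V}
    (hx : G.Adj u x) (hy : G.Adj u y) (hz : G.Adj u z)
    (hxy : G.Adj x y) (hyz : G.Adj y z) (hxz : G.Adj x z)
    (hw1 : ¬ G.Adj u w) (hw2 : w ≠ u) :
    ¬ (G.Adj w x ∧ G.Adj w y) := fun ⟨hwx, hwy⟩ =>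
  hfree <| contains_theta123_of_adj hxy hwx.symm hwy hx.symm hz hyz.symm
    hxz.ne hy.ne' hw2 fun hwz => hw1 (hwz ▸ hz)

/-- In a θ(1,2,3)-free graph, if `x, y, z ∈ N(u)` form a triangle, then every
vertex `w ∉ N(u) ∪ {u}` is adjacent to at most one of `x, y, z`. -/
theorem stmt11 {V : Type*} (G : SimpleGraph V) (hfree : ¬ contains theta123 G)
    (u x y z : V) (hx : G.Adj u x) (hy : G.Adj u y) (hz : G.Adj u z)
    (hxy : G.Adj x y) (hyz : G.Adj y z) (hxz : G.Adj x z)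
    (w : V) (hw1 : ¬ G.Adj u w) (hw2 : w ≠ u) :
    ¬ (G.Adj w x ∧ G.Adj w y) ∧ ¬ (G.Adj w x ∧ G.Adj w z) ∧
      ¬ (G.Adj w y ∧ G.Adj w z) := by
  exact ⟨not_adj_and_adj_of_triangle_of_theta123_free hfree hx hy hz hxy hyz hxz hw1 hw2,
      not_adj_and_adj_of_triangle_of_theta123_free hfree hx hz hy hxz hyz.symm hxy hw1 hw2,
      not_adj_and_adj_of_triangle_of_theta123_free hfree hy hz hx hyz hxz.symm hxy.symm hw1 hw2⟩
end

section
/- Let G be a θ(1,2,2)-free simple graph on n vertices containing a vertex of degree n − 1. Then G is isomorphic to a subgraph of F_n. -/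
/-!
Let `v` be the vertex of degree `n - 1`, so `v` is adjacent to every other vertex. A vertex
`x ≠ v` with two distinct neighbours `y, z ≠ v` would span, together with `v`, a copy of
θ(1,2,2) whose branch vertices are `v` and `x`. Hence `G - v` is a matching. Labelling the
vertices of `G - v` by `1, …, n - 1` so that every matched pair receives labels `{2k - 1, 2k}`
and sending `v` to the centre embeds `G` in `Fₙ`; such a labelling is built by induction,
placing a matched pair at the bottom of the labels or an unmatched vertex at the top.
-/

open SimpleGraph Finset

theorem exists_pairing_labelling {V : Type*} [DecidableEq V] (G : SimpleGraph V) (s : Finset V)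
    (hG : ∀ x ∈ s, ∀ y ∈ s, ∀ z ∈ s, G.Adj x y → G.Adj x z → y = z) :
    ∃ g : V → ℕ, Set.InjOn g s ∧ (∀ x ∈ s, g x < #s) ∧
      ∀ a ∈ s, ∀ b ∈ s, G.Adj a b → g a / 2 = g b / 2 := by
  induction s using Finset.strongInduction with
  | H s ih =>
    by_cases hedge : ∃ a ∈ s, ∃ b ∈ s, G.Adj a b
    · obtain ⟨a, ha, b, hb, hab⟩ := hedge
      have hb' : b ∈ s.erase a := mem_erase.2 ⟨hab.ne.symm, hb⟩
      set t := (s.erase a).erase b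
      have hts : t ⊂ s := (erase_ssubset hb').trans (erase_ssubset ha)
      have hcard : #t + 2 = #s := by rw [← card_erase_add_one ha, ← card_erase_add_one hb']
      obtain ⟨g, hinj, hlt, hpair⟩ :=
        ih t hts fun x hx y hy z hz => hG x (hts.subset hx) y (hts.subset hy) z (hts.subset hz)
      -- By `hG`, the edge `ab` is the only edge of `G` inside `s` that meets `{a, b}`.
      refine ⟨fun x => if x = a then 0 else if x = b then 1 else g x + 2,
        fun x _ y _ _ => by grind [Set.InjOn], fun x _ => by grind,
        fun x _ y _ _ => by grind [G.adj_comm]⟩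
    · obtain rfl | ⟨a, ha⟩ := s.eq_empty_or_nonempty
      · exact ⟨fun _ => 0, by simp, by simp, by simp⟩
      have hts : s.erase a ⊂ s := erase_ssubset ha
      obtain ⟨g, hinj, hlt, hpair⟩ :=
        ih _ hts fun x hx y hy z hz => hG x (hts.subset hx) y (hts.subset hy) z (hts.subset hz)
      exact ⟨fun x => if x = a then #(s.erase a) else g x,
        fun x _ y _ _ => by grind [Set.InjOn], fun x _ => by grind, by grind⟩

theorem eq_of_adj_of_adj_of_theta122_free {V : Type*} {G : SimpleGraph V}
    (hfree : ¬ contains theta122 G) {v : V} (hv : G.IsUniversal v) {x y z : V}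
    (hx : x ≠ v) (hy : y ≠ v) (hz : z ≠ v) (hxy : G.Adj x y) (hxz : G.Adj x z) : y = z := by
  by_contra hyz
  refine hfree ⟨![v, x, y, z], ?_, ?_⟩
  · intro i j hij
    fin_cases i <;> fin_cases j <;> simp_all [hxy.ne, hxz.ne, eq_comm]
  · intro i j hij
    simp only [theta122, fromEdgeSet_adj, Set.mem_insert_iff, Set.mem_singleton_iff,
      Sym2.eq_iff] at hij
    fin_cases i <;> fin_cases j <;> simp_all [IsUniversal, adj_comm, eq_comm]

theorem contains_friendship_of_adj_unique {V : Type*} [Fintype V] [DecidableEq V]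
    {n : ℕ} (hn : Fintype.card V = n) (G : SimpleGraph V) (v : V)
    (hG : ∀ x ≠ v, ∀ y ≠ v, ∀ z ≠ v, G.Adj x y → G.Adj x z → y = z) :
    contains G (friendship n) := by
  subst hn
  obtain ⟨g, hinj, hlt, hpair⟩ := exists_pairing_labelling G (univ.erase v) (by simpa using hG)
  simp only [coe_erase, coe_univ, mem_erase, mem_univ, and_true,
    card_erase_of_mem (mem_univ v), card_univ] at hinj hlt hpair
  set f : V → ℕ := fun x => if x = v then 0 else g x + 1
  have hf : ∀ x, f x < Fintype.card V := fun x => by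
    have := hlt x
    have := Fintype.card_pos_iff.2 ⟨v⟩
    grind
  have hf_inj : Function.Injective f := fun x y _ => by grind [Set.InjOn]
  refine ⟨fun x => ⟨f x, hf x⟩, fun x y hxy => hf_inj (congrArg Fin.val hxy), fun a b hab => ?_⟩
  have hne := hab.ne
  rw [friendship, fromRel_adj]
  exact ⟨fun h => hne (hf_inj (congrArg Fin.val h)), by grind⟩

/-- A θ(1,2,2)-free graph on `n` vertices with a vertex of degree `n − 1` is
isomorphic to a subgraph of `Fₙ`. -/
theorem stmt12 (n : ℕ) (G : SimpleGraph (Fin n)) [DecidableRel G.Adj]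
    (hfree : ¬ contains theta122 G) (v : Fin n) (hv : G.degree v = n - 1) :
    contains G (friendship n) := by
  have hvu : G.IsUniversal v := by rwa [← degree_eq_card_sub_one, Fintype.card_fin]
  exact contains_friendship_of_adj_unique (Fintype.card_fin n) G v fun x hx y hy z hz =>
    eq_of_adj_of_adj_of_theta122_free hfree hvu hx hy hz
end

section
/- Let G be a simple graph on n vertices that is both θ(1,2,2)-free and F₅-free and contains a vertex of degree n − 1. Then G is isomorphic to a subgraph of S_{n,1}⁺. -/
open SimpleGraph Finset

/-! Let `v` be the vertex of degree `n − 1`; it is adjacent to every other vertex. Two distinct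
edges of `G − v` with a common endpoint `a` give a θ(1,2,2) whose branch vertices are `v` and
`a`, and two disjoint edges of `G − v` give an F₅ centred at `v`. So `G − v` has at most one
edge, and a permutation sending `v` to the centre `0` of `S_{n,1}⁺` and that edge to `{1, 2}`
embeds `G` into `S_{n,1}⁺`. -/

theorem contains_theta122_of_adj {V : Type*} {G : SimpleGraph V} {x y a b : V} (hab : a ≠ b)
    (hxy : G.Adj x y) (hxa : G.Adj x a) (hya : G.Adj y a) (hxb : G.Adj x b) (hyb : G.Adj y b) :
    contains theta122 G := by
  refine ⟨![x, y, a, b], ?_, fun i j h => ?_⟩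
  · simp only [Matrix.vecCons, Fin.cons_injective_iff]
    simp [Function.injective_of_subsingleton, hxy.ne, hxa.ne, hya.ne, hxb.ne, hyb.ne, hab]
  · fin_cases i <;> fin_cases j <;> simp_all [theta122, G.adj_comm]

theorem contains_friendship5_of_adj {V : Type*} {G : SimpleGraph V} {x a b c d : V}
    (hxa : G.Adj x a) (hxb : G.Adj x b) (hab : G.Adj a b)
    (hxc : G.Adj x c) (hxd : G.Adj x d) (hcd : G.Adj c d)
    (hac : a ≠ c) (had : a ≠ d) (hbc : b ≠ c) (hbd : b ≠ d) :
    contains (friendship 5) G := by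
  refine ⟨![x, a, b, c, d], ?_, fun i j h => ?_⟩
  · simp only [Matrix.vecCons, Fin.cons_injective_iff]
    simp [Function.injective_of_subsingleton, hxa.ne, hxb.ne, hxc.ne, hxd.ne, hab.ne, hcd.ne,
      hac, had, hbc, hbd]
  · fin_cases i <;> fin_cases j <;> simp_all [friendship, G.adj_comm]

namespace SimpleGraph.IsUniversal

variable {V : Type*} {G : SimpleGraph V} {v : V}

theorem eq_of_adj_of_adj (hv : G.IsUniversal v) (hθ : ¬ contains theta122 G) {a b c : V}
    (ha : a ≠ v) (hb : b ≠ v) (hc : c ≠ v) (hab : G.Adj a b) (hac : G.Adj a c) : b = c := by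
  by_contra hbc
  exact hθ (contains_theta122_of_adj hbc (hv ha.symm) (hv hb.symm) hab (hv hc.symm) hac)

theorem sym2_eq_of_adj (hv : G.IsUniversal v) (hθ : ¬ contains theta122 G)
    (hF : ¬ contains (friendship 5) G) {a b c d : V} (ha : a ≠ v) (hb : b ≠ v) (hc : c ≠ v)
    (hd : d ≠ v) (hab : G.Adj a b) (hcd : G.Adj c d) : s(a, b) = s(c, d) := by
  by_contra hne
  rw [Sym2.eq_iff] at hne
  refine hF (contains_friendship5_of_adj (hv ha.symm) (hv hb.symm) hab (hv hc.symm) (hv hd.symm)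
    hcd ?_ ?_ ?_ ?_)
  · rintro rfl
    exact hne (Or.inl ⟨rfl, hv.eq_of_adj_of_adj hθ ha hb hd hab hcd⟩)
  · rintro rfl
    exact hne (Or.inr ⟨rfl, hv.eq_of_adj_of_adj hθ ha hb hc hab hcd.symm⟩)
  · rintro rfl
    exact hne (Or.inr ⟨hv.eq_of_adj_of_adj hθ hb ha hd hab.symm hcd, rfl⟩)
  · rintro rfl
    exact hne (Or.inl ⟨hv.eq_of_adj_of_adj hθ hb ha hc hab.symm hcd.symm, rfl⟩)

end SimpleGraph.IsUniversal

theorem splus_adj_of_val_eq_zero {n : ℕ} {i j : Fin n} (hij : i ≠ j) (hi : i.val = 0) :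
    (Splus n).Adj i j :=
  (fromRel_adj _ _ _).2 ⟨hij, Or.inl (Or.inl hi)⟩

theorem contains_splus_of_map {V : Type*} {G : SimpleGraph V} {n : ℕ} {v : V} (f : V → Fin n)
    (hf : Function.Injective f) (hfv : (f v).val = 0)
    (h : ∀ x y, G.Adj x y → x ≠ v → y ≠ v →
      (f x).val = 1 ∧ (f y).val = 2 ∨ (f y).val = 1 ∧ (f x).val = 2) :
    contains G (Splus n) := by
  refine ⟨f, hf, fun x y hxy => ?_⟩
  have hne : f x ≠ f y := hf.ne hxy.ne
  rcases eq_or_ne x v with rfl | hx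
  · exact splus_adj_of_val_eq_zero hne hfv
  rcases eq_or_ne y v with rfl | hy
  · exact (splus_adj_of_val_eq_zero hne.symm hfv).symm
  exact (fromRel_adj _ _ _).2 ⟨hne, (h x y hxy hx hy).imp Or.inr Or.inr⟩

theorem exists_perm_fin_eq_zero_one_two {n : ℕ} {u a b : Fin n} (hua : u ≠ a) (hub : u ≠ b)
    (hab : a ≠ b) :
    ∃ σ : Equiv.Perm (Fin n), (σ u).val = 0 ∧ (σ a).val = 1 ∧ (σ b).val = 2 := by
  have inj : Function.Injective ![u, a, b] := by
    simp only [Matrix.vecCons, Fin.cons_injective_iff]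
    simp [Function.injective_of_subsingleton, hua, hub, hab]
  have hn : 3 ≤ n := by simpa using Fintype.card_le_of_injective _ inj
  obtain ⟨σ, hσ⟩ := Equiv.Perm.exists_extending_pair ![u, a, b]
    ![⟨0, by omega⟩, ⟨1, by omega⟩, ⟨2, by omega⟩] inj (by
      simp only [Matrix.vecCons, Fin.cons_injective_iff]
      simp [Function.injective_of_subsingleton, Fin.ext_iff])
  exact ⟨σ, congrArg Fin.val (hσ 0), congrArg Fin.val (hσ 1), congrArg Fin.val (hσ 2)⟩

/-- A {θ(1,2,2), F₅}-free graph on `n` vertices with a vertex of degree `n − 1`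
is isomorphic to a subgraph of `S_{n,1}⁺`. -/
theorem stmt13 (n : ℕ) (G : SimpleGraph (Fin n)) [DecidableRel G.Adj]
    (h1 : ¬ contains theta122 G) (h2 : ¬ contains (friendship 5) G)
    (v : Fin n) (hv : G.degree v = n - 1) :
    contains G (Splus n) := by
  have hvU : G.IsUniversal v := (G.degree_eq_card_sub_one v).1 (by simpa using hv)
  by_cases hex : ∃ a b, G.Adj a b ∧ a ≠ v ∧ b ≠ v
  · obtain ⟨a, b, hab, ha, hb⟩ := hex
    obtain ⟨σ, hσv, hσa, hσb⟩ := exists_perm_fin_eq_zero_one_two ha.symm hb.symm hab.ne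
    refine contains_splus_of_map σ σ.injective hσv fun x y hxy hx hy => ?_
    rcases Sym2.eq_iff.1 (hvU.sym2_eq_of_adj h1 h2 hx hy ha hb hxy hab) with
      ⟨rfl, rfl⟩ | ⟨rfl, rfl⟩
    · exact Or.inl ⟨hσa, hσb⟩
    · exact Or.inr ⟨hσa, hσb⟩
  · push Not at hex
    exact contains_splus_of_map (Equiv.swap v ⟨0, v.pos⟩) (Equiv.injective _) (by simp)
      fun x y hxy hx hy => absurd (hex x y hxy hx) hy
end

section
/- Let G be a θ(1,2,2)-free simple graph on n vertices, let u be a vertex of G with d(u) ≥ 1, and let t be the number of edges of the subgraph of G induced by N(u). Then d(u) + (1/d(u)) · Σ_{w ∈ N(u)} d(w) ≤ n − t·(n − 3 − d(u))/d(u); equivalently, Σ_{w ∈ N(u)} d(w) ≤ d(u) + 2t + (d(u) − t)(n − 1 − d(u)). -/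
open SimpleGraph Finset

/-! In a θ(1,2,2)-free graph every edge lies in at most one triangle. Hence `G[N(u)]` is a
matching with `t` edges, and the neighbours in `N(u)` of a vertex `x ≠ u` form an independent
set `S` (an edge inside `S` would lie in the triangles through `u` and through `x`); every
matching edge thus has an endpoint in `N(u) \ S`, so `|S| ≤ d(u) - t`. Now count the edges
leaving `N(u)`: `∑_{w ∈ N(u)} d(w) = ∑_x |N(x) ∩ N(u)|`, where `u` contributes `d(u)`, the
vertices of `N(u)` contribute `2t`, and each of the other `n - 1 - d(u)` vertices at most
`d(u) - t`. The first inequality is the second one divided by `d(u)`. -/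

namespace SimpleGraph

variable {V : Type*} {G : SimpleGraph V}

theorem subsingleton_commonNeighbors_of_not_contains_theta122 (hG : ¬ contains theta122 G)
    {a b : V} (hab : G.Adj a b) : (G.commonNeighbors a b).Subsingleton := by
  rintro c ⟨hac, hbc⟩ e ⟨hae, hbe⟩
  by_contra hce
  refine hG ⟨![a, b, c, e], ?_, ?_⟩
  · intro i j h
    fin_cases i <;> fin_cases j <;> simp_all [hab.ne, hac.ne, hae.ne, hbc.ne, hbe.ne, eq_comm]
  · intro i j h
    fin_cases i <;> fin_cases j <;> simp_all [theta122, G.adj_comm]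

theorem sum_card_filter_adj_le_sum_sdiff_of_isIndepSet [DecidableEq V] [DecidableRel G.Adj]
    {S N : Finset V} (hSN : S ⊆ N) (hS : G.IsIndepSet S) :
    ∑ w ∈ S, #{x ∈ N | G.Adj w x} ≤ ∑ y ∈ N \ S, #{x ∈ N | G.Adj y x} :=
  calc ∑ w ∈ S, #{x ∈ N | G.Adj w x}
      = ∑ w ∈ S, #{y ∈ N \ S | G.Adj w y} := by
        refine sum_congr rfl fun w hw => congrArg card ?_
        ext y
        simp only [mem_filter, mem_sdiff]
        exact ⟨fun h => ⟨⟨h.1, fun hy => hS hw hy h.2.ne h.2⟩, h.2⟩,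
          fun h => ⟨h.1.1, h.2⟩⟩
    _ = ∑ y ∈ N \ S, #{w ∈ S | G.Adj w y} :=
        sum_card_bipartiteAbove_eq_sum_card_bipartiteBelow _
    _ ≤ ∑ y ∈ N \ S, #{x ∈ N | G.Adj y x} := by
        refine sum_le_sum fun y _ => card_le_card fun w hw => ?_
        rw [mem_filter] at hw ⊢
        exact ⟨hSN hw.1, hw.2.symm⟩

variable [Fintype V] [DecidableRel G.Adj]

theorem sum_degree_eq_sum_card_filter_adj (s : Finset V) :
    ∑ w ∈ s, G.degree w = ∑ x, #{w ∈ s | G.Adj x w} := by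
  have := sum_card_bipartiteAbove_eq_sum_card_bipartiteBelow (s := s) (t := univ) (r := G.Adj)
  simp only [bipartiteAbove, bipartiteBelow, ← neighborFinset_eq_filter,
    card_neighborFinset_eq_degree] at this
  simp_rw [this, G.adj_comm]

theorem two_mul_edgesIn [DecidableEq V] (s : Set V) [DecidablePred (· ∈ s)] :
    2 * edgesIn G s = ∑ w ∈ s.toFinset, #{x ∈ s.toFinset | G.Adj w x} := by
  have hedges : edgesIn G s = #(G.induce s).edgeFinset := by
    rw [← card_map, map_edgeFinset_induce, edgesIn, ← Set.ncard_coe_finset]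
    congr 1
    ext e
    simp [Set.mem_sym2_iff_subset, Set.subset_def]
  have hdeg (w : s) : (G.induce s).degree w = #{x ∈ s.toFinset | G.Adj w x} := by
    rw [← card_neighborFinset_eq_degree, ← card_map, map_neighborFinset_induce]
    congr 1
    ext x
    simp [and_comm]
  rw [hedges, ← sum_degrees_eq_twice_card_edges]
  simp only [hdeg]
  exact Finset.sum_set_coe (f := fun w => #{x ∈ s.toFinset | G.Adj w x}) s

theorem two_mul_edgesIn_neighborSet [DecidableEq V] (u : V) :
    2 * edgesIn G (G.neighborSet u) =
      ∑ w ∈ G.neighborFinset u, #{x ∈ G.neighborFinset u | G.Adj w x} := by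
  rw [two_mul_edgesIn]
  simp only [neighborFinset_def]

theorem card_filter_adj_neighborFinset_le_one (hG : ¬ contains theta122 G) {u w : V}
    (huw : G.Adj u w) : #{x ∈ G.neighborFinset u | G.Adj w x} ≤ 1 := by
  refine card_le_one.mpr fun x hx y hy => ?_
  simp only [mem_filter, mem_neighborFinset] at hx hy
  exact subsingleton_commonNeighbors_of_not_contains_theta122 hG huw hx hy

theorem isIndepSet_filter_adj_neighborFinset (hG : ¬ contains theta122 G) {u x : V}
    (hxu : x ≠ u) : G.IsIndepSet ↑{w ∈ G.neighborFinset u | G.Adj x w} := by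
  intro w hw y hy _ hwy
  simp only [coe_filter, mem_neighborFinset, Set.mem_ofPred_eq] at hw hy
  exact hxu (subsingleton_commonNeighbors_of_not_contains_theta122 hG hwy
    ⟨hw.2.symm, hy.2.symm⟩ ⟨hw.1.symm, hy.1.symm⟩)

theorem edgesIn_neighborSet_add_card_filter_adj_le_degree [DecidableEq V]
    (hG : ¬ contains theta122 G) {u x : V} (hxu : x ≠ u) :
    edgesIn G (G.neighborSet u) + #{w ∈ G.neighborFinset u | G.Adj x w} ≤ G.degree u := by
  set N := G.neighborFinset u
  set S := {w ∈ N | G.Adj x w}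
  have hSN : S ⊆ N := filter_subset _ _
  have htwice : 2 * edgesIn G (G.neighborSet u) =
      ∑ w ∈ N \ S, #{y ∈ N | G.Adj w y} + ∑ w ∈ S, #{y ∈ N | G.Adj w y} := by
    rw [two_mul_edgesIn_neighborSet, sum_sdiff hSN]
  have hS := sum_card_filter_adj_le_sum_sdiff_of_isIndepSet hSN
    (isIndepSet_filter_adj_neighborFinset hG hxu)
  have hNS : ∑ w ∈ N \ S, #{y ∈ N | G.Adj w y} ≤ #(N \ S) := by
    simpa using sum_le_card_nsmul (N \ S) _ 1 fun w hw =>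
      card_filter_adj_neighborFinset_le_one hG ((mem_neighborFinset _ _ _).mp (mem_sdiff.mp hw).1)
  have hcard : #(N \ S) + #S = G.degree u := card_sdiff_add_card_eq_card hSN
  omega

theorem sum_degree_neighborFinset_eq [DecidableEq V] (u : V) :
    ∑ w ∈ G.neighborFinset u, G.degree w = G.degree u + 2 * edgesIn G (G.neighborSet u) +
      ∑ x ∈ univ \ insert u (G.neighborFinset u), #{w ∈ G.neighborFinset u | G.Adj x w} := by
  rw [sum_degree_eq_sum_card_filter_adj, ← sum_sdiff (subset_univ _),
    sum_insert (G.notMem_neighborFinset_self u), two_mul_edgesIn_neighborSet,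
    filter_true_of_mem fun w => (mem_neighborFinset _ _ _).mp, card_neighborFinset_eq_degree]
  ring

theorem sum_card_filter_adj_add_mul_edgesIn_le [DecidableEq V] (hG : ¬ contains theta122 G)
    (u : V) :
    ∑ x ∈ univ \ insert u (G.neighborFinset u), #{w ∈ G.neighborFinset u | G.Adj x w} +
        #(univ \ insert u (G.neighborFinset u)) * edgesIn G (G.neighborSet u) ≤
      #(univ \ insert u (G.neighborFinset u)) * G.degree u := by
  rw [← smul_eq_mul, ← sum_const, ← sum_add_distrib]
  refine sum_le_card_nsmul _ _ _ fun x hx => ?_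
  have hxu : x ≠ u := fun h => (mem_sdiff.mp hx).2 (h ▸ mem_insert_self _ _)
  linarith [edgesIn_neighborSet_add_card_filter_adj_le_degree hG hxu]

theorem sum_degree_neighborFinset_le [DecidableEq V] (hG : ¬ contains theta122 G) (u : V) :
    (∑ w ∈ G.neighborFinset u, (G.degree w : ℝ)) ≤
      G.degree u + 2 * edgesIn G (G.neighborSet u) +
        (G.degree u - edgesIn G (G.neighborSet u)) * (Fintype.card V - 1 - G.degree u) := by
  set R := univ \ insert u (G.neighborFinset u)
  have hcard : #R + (G.degree u + 1) = Fintype.card V := by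
    rw [← card_univ, ← card_sdiff_add_card_eq_card (subset_univ _),
      card_insert_of_notMem (G.notMem_neighborFinset_self u), card_neighborFinset_eq_degree]
  have hsum : (∑ w ∈ G.neighborFinset u, (G.degree w : ℝ)) = G.degree u +
      2 * edgesIn G (G.neighborSet u) +
        ∑ x ∈ R, (#{w ∈ G.neighborFinset u | G.Adj x w} : ℝ) := by
    exact_mod_cast sum_degree_neighborFinset_eq u
  have hout : ∑ x ∈ R, (#{w ∈ G.neighborFinset u | G.Adj x w} : ℝ) +
      #R * edgesIn G (G.neighborSet u) ≤ #R * G.degree u := by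
    exact_mod_cast sum_card_filter_adj_add_mul_edgesIn_le hG u
  have hR : (Fintype.card V : ℝ) - 1 - G.degree u = #R := by
    rw [← hcard]; push_cast; ring
  rw [hsum, hR]
  linarith

end SimpleGraph

/-- In a θ(1,2,2)-free graph on `n` vertices, for a vertex `u` of degree at
least 1, with `t` the number of edges in `G[N(u)]`:
`d(u) + (1/d(u)) ∑_{w ∈ N(u)} d(w) ≤ n − t (n − 3 − d(u)) / d(u)`; equivalently
`∑_{w ∈ N(u)} d(w) ≤ d(u) + 2t + (d(u) − t)(n − 1 − d(u))`. -/
theorem stmt14 (n : ℕ) (G : SimpleGraph (Fin n)) [DecidableRel G.Adj]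
    (hfree : ¬ contains theta122 G) (u : Fin n) (hd : 1 ≤ G.degree u) :
    (G.degree u : ℝ) +
        (1 / (G.degree u : ℝ)) * ∑ w ∈ G.neighborFinset u, (G.degree w : ℝ) ≤
      (n : ℝ) - (edgesIn G (G.neighborSet u) : ℝ) *
        ((n : ℝ) - 3 - (G.degree u : ℝ)) / (G.degree u : ℝ) ∧
    (∑ w ∈ G.neighborFinset u, (G.degree w : ℝ)) ≤
      (G.degree u : ℝ) + 2 * (edgesIn G (G.neighborSet u) : ℝ) +
        ((G.degree u : ℝ) - (edgesIn G (G.neighborSet u) : ℝ)) *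
          ((n : ℝ) - 1 - (G.degree u : ℝ)) := by
  have hsum := sum_degree_neighborFinset_le hfree u
  rw [Fintype.card_fin] at hsum
  refine ⟨?_, hsum⟩
  set d : ℝ := (G.degree u : ℝ)
  set t : ℝ := (edgesIn G (G.neighborSet u) : ℝ)
  have hd : 0 < d := Nat.cast_pos.mpr hd
  calc d + 1 / d * ∑ w ∈ G.neighborFinset u, (G.degree w : ℝ)
      ≤ d + 1 / d * (d + 2 * t + (d - t) * (n - 1 - d)) := by gcongr
    _ = n - t * (n - 3 - d) / d := by field_simp; ring
end
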